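/- arXiv:1003.5200 — 5 statements merged into one kernel-verified Lean document; each statement's English description precedes it below -/
import Mathlib

section
/- Let n ≥ 1 and k ≥ 1 be integers, let w_0 ≤ w_1 ≤ … ≤ w_n be positive integers and let d_1, …, d_k be positive integers such that: (i) w_j divides d_i for all j ∈ {0,…,n} and all i ∈ {1,…,k}; (ii) d_1 + … + d_k < w_0 + … + w_n; (iii) for every subset {i_1,…,i_{k+1}} ⊆ {0,…,n} of size k+1 the greatest common divisor of w_{i_1},…,w_{i_{k+1}} equals 1. Then there exist k pairwise disjoint subsets I_1, …, I_k of {0,…,n} such that d_i = ∑_{j ∈ I_i} w_j for every i ∈ {1,…,k}, and w_j = 1 for every j ∈ {0,…,n} not belonging to I_1 ∪ … ∪ I_k. -/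
/-!
Let `g` be the least common multiple of the weights; it divides every degree. By smoothness
every prime divides at most `k` of the weights different from `1`, and this suffices to split
those weights into `k` groups of total weight at most `g`, by induction on `k`. Take `G`
inclusion-minimal among the sets of such weights that meet every prime dividing exactly `k` of
them. Minimality gives each member of `G` a prime dividing no other member, which forces
`∑_G w ≤ g`; outside `G` every prime divides at most `k - 1` of the weights. By the Fano
condition the indices of weight `1` then suffice to fill each group up to its degree.
-/

open Finset Function

section
variable {ι : Type*}

theorem Finset.sum_le_prod_of_two_le (s : Finset ι) {f : ι → ℕ}
    (hf : ∀ i ∈ s, 2 ≤ f i) :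
    ∑ i ∈ s, f i ≤ ∏ i ∈ s, f i := by
  induction s using Finset.cons_induction with
  | empty => simp
  | cons a s ha ih =>
    rw [sum_cons, prod_cons]
    have ih := ih fun i hi => hf i (mem_cons_of_mem hi)
    obtain rfl | ⟨b, hb⟩ := s.eq_empty_or_nonempty
    · simp
    · have two_le_prod : 2 ≤ ∏ i ∈ s, f i :=
        (hf b (mem_cons_of_mem hb)).trans ((single_le_sum (fun _ _ => Nat.zero_le _) hb).trans ih)
      exact (Nat.add_le_add_left ih _).trans (add_le_mul (hf a (mem_cons_self a s)) two_le_prod)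

theorem Finset.prod_dvd_of_prime_of_injOn {M₀ : Type*} [CommMonoidWithZero M₀]
    [IsCancelMulZero M₀] [Subsingleton M₀ˣ] {s : Finset ι} {q : ι → M₀} {n : M₀}
    (hq : ∀ i ∈ s, Prime (q i)) (hinj : Set.InjOn q s) (hdvd : ∀ i ∈ s, q i ∣ n) :
    ∏ i ∈ s, q i ∣ n := by
  classical
  have := prod_primes_dvd (s := s.image q) n (by simpa using hq) (by simpa using hdvd)
  rwa [prod_image hinj] at this

theorem Finset.exists_pairwise_disjoint_card_eq {κ : Type*} [Fintype κ] (s : Finset ι)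
    (e : κ → ℕ) (h : ∑ i, e i ≤ #s) :
    ∃ t : κ → Finset ι, (∀ i, t i ⊆ s) ∧ Pairwise (Disjoint on t) ∧
      ∀ i, #(t i) = e i := by
  obtain ⟨φ⟩ : Nonempty ((Σ i, Fin (e i)) ↪ s) :=
    Embedding.nonempty_of_card_le (by simpa using h)
  let ψ : (Σ i, Fin (e i)) ↪ ι := φ.trans (Embedding.subtype _)
  refine ⟨fun i => univ.map ((Embedding.sigmaMk i).trans ψ), ?_, ?_, ?_⟩
  · intro i x hx
    obtain ⟨a, -, rfl⟩ := mem_map.mp hx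
    exact (φ _).2
  · intro i i' hne
    refine disjoint_left.mpr fun x hx hx' => ?_
    obtain ⟨a, -, rfl⟩ := mem_map.mp hx
    obtain ⟨a', -, h⟩ := mem_map.mp hx'
    exact hne (congrArg Sigma.fst (ψ.injective h)).symm
  · simp

theorem card_filter_dvd_le_of_gcd_eq_one {w : ι → ℕ} {k p : ℕ}
    (hgcd : ∀ S : Finset ι, #S = k + 1 → S.gcd w = 1) (hp : p ≠ 1) (s : Finset ι) :
    #{j ∈ s | p ∣ w j} ≤ k := by
  by_contra! h
  obtain ⟨S, hS, hScard⟩ := exists_subset_card_eq h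
  exact hp (Nat.dvd_one.mp (hgcd S hScard ▸ dvd_gcd fun j hj => (mem_filter.mp (hS hj)).2))

variable [DecidableEq ι]

theorem sum_le_of_private_prime_dvd {G : Finset ι} {w q : ι → ℕ} {g : ℕ} (hg : g ≠ 0)
    (hwg : ∀ j ∈ G, w j ∣ g) (hq : ∀ j ∈ G, (q j).Prime) (hqw : ∀ j ∈ G, q j ∣ w j)
    (hpriv : ∀ j ∈ G, ∀ i ∈ G, i ≠ j → ¬ q j ∣ w i) :
    ∑ j ∈ G, w j ≤ g := by
  have hinj : Set.InjOn q G := fun i hi j hj hij =>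
    by_contra fun hne => hpriv j hj i hi hne (hij ▸ hqw i hi)
  have prod_dvd : ∀ H ⊆ G, ∏ j ∈ H, q j ∣ g := fun H hH =>
    prod_dvd_of_prime_of_injOn (fun j hj => (hq j (hH hj)).prime) (hinj.mono hH)
      fun j hj => (hqw j (hH hj)).trans (hwg j (hH hj))
  obtain ⟨s, hs⟩ := prod_dvd G subset_rfl
  have hs0 : s ≠ 0 := by
    rintro rfl
    exact hg (by rw [hs, mul_zero])
  -- `w j` is coprime to the private primes of the other members, so `w j ∣ q j * (g / ∏ q)`.
  have hle : ∀ j ∈ G, w j ≤ q j * s := by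
    intro j hj
    have hcop : Nat.Coprime (w j) (∏ i ∈ G.erase j, q i) := Nat.Coprime.prod_right fun i hi =>
      Nat.Coprime.symm <| (hq i (mem_of_mem_erase hi)).coprime_iff_not_dvd.mpr <|
        hpriv i (mem_of_mem_erase hi) j hj (ne_of_mem_erase hi).symm
    have hdvd : w j * ∏ i ∈ G.erase j, q i ∣ q j * s * ∏ i ∈ G.erase j, q i := by
      rw [mul_right_comm, mul_prod_erase G q hj, ← hs]
      exact hcop.mul_dvd_of_dvd_of_dvd (hwg j hj) (prod_dvd _ (erase_subset j G))
    have hpos : 0 < ∏ i ∈ G.erase j, q i :=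
      prod_pos fun i hi => (hq i (mem_of_mem_erase hi)).pos
    exact Nat.le_of_dvd (Nat.pos_of_ne_zero (mul_ne_zero (hq j hj).ne_zero hs0))
      (Nat.dvd_of_mul_dvd_mul_right hpos hdvd)
  calc ∑ j ∈ G, w j ≤ ∑ j ∈ G, q j * s := sum_le_sum hle
    _ = (∑ j ∈ G, q j) * s := (sum_mul ..).symm
    _ ≤ (∏ j ∈ G, q j) * s :=
      Nat.mul_le_mul_right s (sum_le_prod_of_two_le G fun j hj => (hq j hj).two_le)
    _ = g := hs.symm

theorem exists_subset_sum_le_and_card_filter_dvd_le {V : Finset ι} {w : ι → ℕ} {g k : ℕ}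
    (hg : g ≠ 0) (hwg : ∀ j ∈ V, w j ∣ g)
    (hV : ∀ p : ℕ, p.Prime → #{j ∈ V | p ∣ w j} ≤ k + 1) :
    ∃ G ⊆ V, ∑ j ∈ G, w j ≤ g ∧
      ∀ p : ℕ, p.Prime → #{j ∈ V \ G | p ∣ w j} ≤ k := by
  let Meets (G : Finset ι) : Prop :=
    ∀ p : ℕ, p.Prime → #{j ∈ V | p ∣ w j} = k + 1 → ∃ j ∈ G, p ∣ w j
  have meets_V : Meets V := fun p _ hp => by
    obtain ⟨j, hj⟩ := card_pos.mp (by omega : 0 < #{j ∈ V | p ∣ w j})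
    exact ⟨j, mem_filter.mp hj⟩
  obtain ⟨G, hGV, hG, hGmin⟩ := exists_minimal_le_of_wellFoundedLT Meets V meets_V
  have private_prime :
      ∀ j ∈ G, ∃ q : ℕ, q.Prime ∧ q ∣ w j ∧ ∀ i ∈ G, i ≠ j → ¬ q ∣ w i := by
    intro j hj
    have : ¬ Meets (G.erase j) := fun h => notMem_erase j G (hGmin h (erase_subset j G) hj)
    simp only [Meets, not_forall, not_exists, not_and] at this
    obtain ⟨p, hp, hsat, hnot⟩ := this
    obtain ⟨i, hi, hpi⟩ := hG p hp hsat
    obtain rfl : i = j := by_contra fun hij => hnot i (mem_erase.mpr ⟨hij, hi⟩) hpi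
    exact ⟨p, hp, hpi, fun i' hi' hne => hnot i' (mem_erase.mpr ⟨hne, hi'⟩)⟩
  choose! q hq hqw hpriv using private_prime
  refine ⟨G, hGV, sum_le_of_private_prime_dvd hg (fun j hj => hwg j (hGV hj)) hq hqw hpriv,
    fun p hp => ?_⟩
  have hsub : {j ∈ V \ G | p ∣ w j} ⊆ {j ∈ V | p ∣ w j} :=
    filter_subset_filter _ sdiff_subset
  by_cases hsat : #{j ∈ V | p ∣ w j} = k + 1
  · obtain ⟨j, hj, hpj⟩ := hG p hp hsat
    have := card_lt_card ((ssubset_iff_of_subset hsub).mpr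
      ⟨j, mem_filter.mpr ⟨hGV hj, hpj⟩, by simp [hj]⟩)
    omega
  · have := card_le_card hsub
    have := hV p hp
    omega

theorem exists_coloring_sum_le {w : ι → ℕ} {g : ℕ} (hg : g ≠ 0) :
    ∀ (k : ℕ) {V : Finset ι}, (∀ j ∈ V, w j ∣ g) → (∀ j ∈ V, w j ≠ 1) →
      (∀ p : ℕ, p.Prime → #{j ∈ V | p ∣ w j} ≤ k) →
      ∃ c : ι → ℕ, (∀ j ∈ V, c j < k) ∧ ∀ i, ∑ j ∈ V with c j = i, w j ≤ g
  | 0, V, _, hw1, hV => by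
    have hV_empty : V = ∅ := eq_empty_of_forall_notMem fun j hj => by
      obtain ⟨p, hp, hpj⟩ := Nat.exists_prime_and_dvd (hw1 j hj)
      have := card_eq_zero.mp (Nat.le_zero.mp (hV p hp))
      exact (filter_eq_empty_iff.mp this) hj hpj
    exact ⟨fun _ => 0, by simp [hV_empty], by simp [hV_empty]⟩
  | k + 1, V, hwg, hw1, hV => by
    obtain ⟨G, hGV, hGsum, hrest⟩ := exists_subset_sum_le_and_card_filter_dvd_le hg hwg hV
    obtain ⟨c, hc, hcsum⟩ := exists_coloring_sum_le hg k
      (fun j hj => hwg j (mem_sdiff.mp hj).1) (fun j hj => hw1 j (mem_sdiff.mp hj).1) hrest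
    refine ⟨fun j => if j ∈ G then k else c j, fun j hj => ?_, fun i => ?_⟩
    · dsimp only
      split_ifs with hjG
      · omega
      · exact (hc j (mem_sdiff.mpr ⟨hj, hjG⟩)).trans k.lt_succ_self
    by_cases hi : i = k
    · refine (sum_le_sum_of_subset fun j hj => ?_).trans hGsum
      simp only [mem_filter] at hj
      by_contra hjG
      have := hc j (mem_sdiff.mpr ⟨hj.1, hjG⟩)
      simp only [hjG, if_false] at hj
      omega
    · refine (sum_le_sum_of_subset fun j hj => ?_).trans (hcsum i)
      simp only [mem_filter] at hj
      by_cases hjG : j ∈ G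
      · simp only [hjG, if_true] at hj
        exact absurd hj.2.symm hi
      · simp only [hjG, if_false] at hj
        exact mem_filter.mpr ⟨mem_sdiff.mpr ⟨hj.1, hjG⟩, hj.2⟩

theorem exists_superset_sum_eq_of_sum_le_add_card {κ : Type*} [Fintype κ] {w : ι → ℕ}
    {d : κ → ℕ} {P : κ → Finset ι} {O : Finset ι} (hP : Pairwise (Disjoint on P))
    (hPO : ∀ i, Disjoint (P i) O) (hO : ∀ j ∈ O, w j = 1)
    (hPd : ∀ i, ∑ j ∈ P i, w j ≤ d i)
    (hd : ∑ i, d i ≤ ∑ i, ∑ j ∈ P i, w j + #O) :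
    ∃ I : κ → Finset ι, Pairwise (Disjoint on I) ∧ (∀ i, P i ⊆ I i) ∧
      ∀ i, d i = ∑ j ∈ I i, w j := by
  obtain ⟨T, hTO, hT, hTcard⟩ := exists_pairwise_disjoint_card_eq O
    (fun i => d i - ∑ j ∈ P i, w j) (by rw [sum_tsub_distrib _ fun i _ => hPd i]; omega)
  refine ⟨fun i => P i ∪ T i, fun i i' hne => ?_, fun i => subset_union_left, fun i => ?_⟩
  · simp only [onFun, disjoint_union_left, disjoint_union_right]
    exact ⟨⟨hP hne, (Disjoint.mono_right (hTO i) (hPO i')).symm⟩,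
      Disjoint.mono_right (hTO i') (hPO i), hT hne⟩
  · rw [sum_union (Disjoint.mono_right (hTO i) (hPO i)), sum_const_nat fun j hj => hO j (hTO i hj),
      mul_one, hTcard i]
    have := hPd i
    omega

end

theorem qnef_partition_exists_general
    (n k : ℕ)
    (w : Fin (n + 1) → ℕ) (d : Fin k → ℕ)
    (hwpos : ∀ j, 0 < w j) (hdpos : ∀ i, 0 < d i)
    (hdvd : ∀ (j : Fin (n + 1)) (i : Fin k), w j ∣ d i)
    (hfano : ∑ i, d i < ∑ j, w j)
    (hgcd : ∀ S : Finset (Fin (n + 1)), S.card = k + 1 → S.gcd w = 1) :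
    ∃ I : Fin k → Finset (Fin (n + 1)),
      (∀ i i', i ≠ i' → Disjoint (I i) (I i')) ∧
      (∀ i, d i = ∑ j ∈ I i, w j) ∧
      (∀ j, (∀ i, j ∉ I i) → w j = 1) := by
  set g := univ.lcm w
  have hg : g ≠ 0 := by simp [g, Finset.lcm_eq_zero_iff, (hwpos _).ne']
  have hgd : ∀ i, g ≤ d i := fun i => Nat.le_of_dvd (hdpos i) (lcm_dvd fun j _ => hdvd j i)
  set V : Finset (Fin (n + 1)) := {j | w j ≠ 1}
  obtain ⟨c, hc, hcsum⟩ := exists_coloring_sum_le hg k (V := V)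
    (fun j _ => dvd_lcm (mem_univ j)) (fun j hj => (mem_filter.mp hj).2)
    (fun p hp => card_filter_dvd_le_of_gcd_eq_one hgcd hp.ne_one V)
  let P (i : Fin k) : Finset (Fin (n + 1)) := {j ∈ V | c j = i}
  have hPsum : ∑ i, ∑ j ∈ P i, w j = ∑ j ∈ V, w j := by
    rw [Fin.sum_univ_eq_sum_range (fun i => ∑ j ∈ V with c j = i, w j)]
    exact sum_fiberwise_of_maps_to (fun j hj => mem_range.mpr (hc j hj)) w
  have hsplit : ∑ j ∈ V, w j + #{j | w j = 1} = ∑ j, w j := by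
    rw [← sum_filter_not_add_sum_filter univ (fun j => w j = 1),
      sum_const_nat (m := 1) fun j hj => (mem_filter.mp hj).2, mul_one]
  obtain ⟨I, hI, hPI, hId⟩ :=
    exists_superset_sum_eq_of_sum_le_add_card (P := P) (O := {j | w j = 1})
      (fun i i' hne => disjoint_filter.mpr fun j _ h h' => hne (Fin.ext (h.symm.trans h')))
      (fun i => (disjoint_filter_filter_not _ _ _).symm.mono_left (filter_subset _ _))
      (fun j hj => (mem_filter.mp hj).2) (fun i => (hcsum i).trans (hgd i)) (by omega)
  refine ⟨I, hI, hId, fun j hj => by_contra fun hw => ?_⟩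
  have hjV : j ∈ V := mem_filter.mpr ⟨mem_univ j, hw⟩
  exact hj ⟨c j, hc j hjV⟩ (hPI _ (mem_filter.mpr ⟨hjV, rfl⟩))

/-- For positive integers `w_0 ≤ … ≤ w_n` and `d_1, …, d_k` satisfying the
Cartier condition (every weight divides every degree), the Fano condition
(`∑ d < ∑ w`) and the smoothness condition (any `k+1` weights are coprime),
there is a Q-nef-partition: pairwise disjoint subsets `I_1, …, I_k` of `{0,…,n}`
with `d_i = ∑_{j ∈ I_i} w_j`, and all weights outside `I_1 ∪ … ∪ I_k` equal `1`. -/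
theorem qnef_partition_exists
    (n k : ℕ) (hn : 1 ≤ n) (hk : 1 ≤ k)
    (w : Fin (n + 1) → ℕ) (d : Fin k → ℕ)
    (hwpos : ∀ j, 0 < w j) (hdpos : ∀ i, 0 < d i)
    (hmono : Monotone w)
    (hdvd : ∀ (j : Fin (n + 1)) (i : Fin k), w j ∣ d i)
    (hfano : ∑ i, d i < ∑ j, w j)
    (hgcd : ∀ S : Finset (Fin (n + 1)), S.card = k + 1 → S.gcd w = 1) :
    ∃ I : Fin k → Finset (Fin (n + 1)),
      (∀ i i', i ≠ i' → Disjoint (I i) (I i')) ∧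
      (∀ i, d i = ∑ j ∈ I i, w j) ∧
      (∀ j, (∀ i, j ∉ I i) → w j = 1) :=
  qnef_partition_exists_general n k w d hwpos hdpos hdvd hfano hgcd
end

section
/- Let n ≥ 1 and k ≥ 1 be integers, let w_0, …, w_n and d_1, …, d_k be positive integers such that: (i) w_j divides d_i for all j ∈ {0,…,n} and i ∈ {1,…,k}; (ii) d_1 + … + d_k < w_0 + … + w_n; (iii) any k+1 of the weights have greatest common divisor 1. Let p be a prime dividing at least one of the weights. Define w'_j = w_j / p if p divides w_j and w'_j = w_j otherwise, and define d'_i = d_i / p. Then the new collection satisfies the same three conditions: (i) w'_j divides d'_i for all j and i; (ii) d'_1 + … + d'_k < w'_0 + … + w'_n; (iii) any k+1 of the numbers w'_0,…,w'_n have greatest common divisor 1. (Note that each d_i is divisible by p since p divides some weight w_j, which divides d_i.) -/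
/-- one step of the reduction process. If positive weights `w_0, …, w_n` and
degrees `d_1, …, d_k` satisfy the Cartier condition (`w_j ∣ d_i`), the Fano condition
(`∑ d < ∑ w`) and the smoothness condition (any `k+1` weights have gcd `1`), and `p` is a
prime dividing at least one weight, then dividing by `p` all degrees and all weights
divisible by `p` yields a collection satisfying the same three conditions. -/
theorem reduction_step
    (n k : ℕ) (hn : 1 ≤ n) (hk : 1 ≤ k)
    (w : Fin (n + 1) → ℕ) (d : Fin k → ℕ)
    (hwpos : ∀ j, 0 < w j) (hdpos : ∀ i, 0 < d i)
    (hdvd : ∀ (j : Fin (n + 1)) (i : Fin k), w j ∣ d i)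
    (hfano : ∑ i, d i < ∑ j, w j)
    (hgcd : ∀ S : Finset (Fin (n + 1)), S.card = k + 1 → S.gcd w = 1)
    (p : ℕ) (hp : p.Prime) (j0 : Fin (n + 1)) (hpj0 : p ∣ w j0)
    (w' : Fin (n + 1) → ℕ)
    (hw' : ∀ j, w' j = if p ∣ w j then w j / p else w j)
    (d' : Fin k → ℕ) (hd' : ∀ i, d' i = d i / p) :
    (∀ (j : Fin (n + 1)) (i : Fin k), w' j ∣ d' i) ∧
    (∑ i, d' i < ∑ j, w' j) ∧
    (∀ S : Finset (Fin (n + 1)), S.card = k + 1 → S.gcd w' = 1) := by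
  have hpd : ∀ i, p ∣ d i := fun i => hpj0.trans (hdvd j0 i)
  have hppos : 0 < p := hp.pos
  refine ⟨?_, ?_, ?_⟩
  · intro j i
    rw [hw' j, hd' i]
    by_cases hpw : p ∣ w j
    · simp only [hpw, if_true]
      obtain ⟨a', ha⟩ := hpw
      obtain ⟨c, hc⟩ := hdvd j i
      rw [ha, hc, ha, Nat.mul_div_cancel_left a' hppos, mul_assoc,
        Nat.mul_div_cancel_left _ hppos]
      exact Dvd.intro c rfl
    · simp only [hpw, if_false]
      obtain ⟨c, hc⟩ := hpd i
      have hcop : (w j).Coprime p := ((hp.coprime_iff_not_dvd).mpr hpw).symm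
      have : w j ∣ p * c := hc ▸ hdvd j i
      rw [hc, Nat.mul_div_cancel_left c hppos]
      exact hcop.dvd_of_dvd_mul_right (by rwa [mul_comm] at this)
  · have hsum_d : ∑ i, d i = p * ∑ i, d' i := by
      rw [Finset.mul_sum]
      exact Finset.sum_congr rfl fun i _ => by
        rw [hd' i, Nat.mul_div_cancel' (hpd i)]
    have hsum_w : ∑ j, w j ≤ p * ∑ j, w' j := by
      rw [Finset.mul_sum]
      refine Finset.sum_le_sum fun j _ => ?_
      rw [hw' j]
      by_cases hpw : p ∣ w j
      · simp only [hpw, if_true]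
        rw [Nat.mul_div_cancel' hpw]
      · simp only [hpw, if_false]
        exact Nat.le_mul_of_pos_left _ hppos
    have : p * ∑ i, d' i < p * ∑ j, w' j := lt_of_le_of_lt (le_of_eq hsum_d.symm)
      (lt_of_lt_of_le hfano hsum_w)
    exact Nat.lt_of_mul_lt_mul_left this
  · intro S hS
    by_contra hne
    obtain ⟨q, hq, hqdvd⟩ := Nat.exists_prime_and_dvd hne
    have hq' : ∀ j ∈ S, q ∣ w' j := fun j hj => hqdvd.trans (Finset.gcd_dvd hj)
    have hqw : ∀ j ∈ S, q ∣ w j := by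
      intro j hj
      have := hq' j hj
      rw [hw' j] at this
      by_cases hpw : p ∣ w j
      · simp only [hpw, if_true] at this
        exact this.trans (Nat.div_dvd_of_dvd hpw)
      · simpa [hpw] using this
    have : q ∣ S.gcd w := Finset.dvd_gcd hqw
    rw [hgcd S hS] at this
    exact hq.one_lt.ne' (Nat.dvd_one.mp this)
end

section
/- Let n ≥ 2 and 0 ≤ r < n be integers and let w_0, w_1, …, w_n be positive integers with w_0 = 1. Set d_1 = w_{r+1} + … + w_n and d_0 = w_0 + w_1 + … + w_r. Consider the multivariate Laurent polynomial over ℚ in the n−1 variables x_1,…,x_r, y_{r+1},…,y_{n−1} (an element of the monoid algebra of ℚ over the group of finitely supported ℤ-valued functions on an (n−1)-element index set) given by f = (y_{r+1} + … + y_{n−1} + 1)^{d_1} · x_1^{−w_1} ⋯ x_r^{−w_r} · y_{r+1}^{−w_{r+1}} ⋯ y_{n−1}^{−w_{n−1}} + x_1 + … + x_r. Then for every natural number m, the constant term (the coefficient of the zero exponent vector) of f^{d_0 · m} equals (d_0 m)! · (d_1 m)! / ((w_0 m)! · (w_1 m)! ⋯ (w_n m)!). -/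
/-!
Write `f = Y ^ d₁ · x⁻ʷ + X` with `X = ∑ xᵢ` and `Y = ∑ yⱼ + 1`. Expanding `f ^ N` binomially and
the powers of `X` and `Y` multinomially, the term indexed by `k` (the power of `Y ^ d₁ · x⁻ʷ`) and
multidegrees `a` of `X ^ (N - k)`, `b` of `Y ^ (d₁ k)` is a monomial in which `xᵢ` has exponent
`aᵢ - k wᵢ` and `yⱼ` has exponent `bⱼ - k wⱼ`. It is constant only if `aᵢ = k wᵢ` and `bⱼ = k wⱼ`;
summing over `i` gives `N - k = k (d₀ - 1)`, so for `N = d₀ m` necessarily `k = m`, and then `a` and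
`b` are determined, the summand `1` of `Y` occurring `d₁ m - ∑ⱼ m wⱼ = m wₙ` times. The constant
term is therefore the single product `C(N, m) · multinomial(b) · multinomial(a)`, which is the
stated ratio of factorials.
-/

open Finset AddMonoidAlgebra
open scoped Nat

section Expansion

variable {R κ ν G : Type*} [CommSemiring R] [AddCommMonoid G]

theorem AddMonoidAlgebra.sum_single_one_pow [DecidableEq κ] (s : Finset κ) (g : κ → G)
    (M : ℕ) :
    (∑ i ∈ s, single (g i) (1 : R)) ^ M =
      ∑ k ∈ s.piAntidiag M, single (∑ i ∈ s, k i • g i) (Nat.multinomial s k : R) := by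
  rw [sum_pow_eq_sum_piAntidiag]
  refine sum_congr rfl fun k _ => ?_
  simp only [single_pow, one_pow]
  rw [prod_single, prod_const_one, natCast_def, single_mul_single, zero_add, mul_one]

theorem AddMonoidAlgebra.sum_pow_mul_single_add_sum_pow [DecidableEq κ] [DecidableEq ν]
    (T : Finset κ) (S : Finset ν) (g : κ → G) (h : ν → G) (v : G) (D N : ℕ) :
    ((∑ t ∈ T, single (g t) (1 : R)) ^ D * single v 1 + ∑ s ∈ S, single (h s) 1) ^ N =
      ∑ k ∈ range (N + 1), ∑ b ∈ T.piAntidiag (D * k), ∑ a ∈ S.piAntidiag (N - k),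
        single (∑ t ∈ T, b t • g t + k • v + ∑ s ∈ S, a s • h s)
          ((Nat.multinomial T b : R) * Nat.multinomial S a * N.choose k) := by
  rw [add_pow]
  refine sum_congr rfl fun k _ => ?_
  rw [mul_pow, single_pow, one_pow, ← pow_mul, sum_single_one_pow, sum_single_one_pow,
    natCast_def]
  simp only [sum_mul, mul_sum, single_mul_single, mul_one, add_zero]
  rw [sum_comm]

end Expansion

theorem Finsupp.sum_nsmul_single_one_apply {ι : Type*} [DecidableEq ι] (s : Finset ι)
    (a : ι → ℕ) (j : ι) :
    (∑ i ∈ s, a i • Finsupp.single i (1 : ℤ)) j = if j ∈ s then (a j : ℤ) else 0 := by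
  simp only [Finsupp.finsetSum_apply, Finsupp.smul_apply, Finsupp.single_apply, smul_ite,
    nsmul_eq_mul, mul_one, smul_zero]
  exact Finset.sum_ite_eq' s j _

section HypersurfaceLGModel

variable {ι : Type*} [Fintype ι] (p : ι → Prop) [DecidablePred p] (w : ι → ℕ) (c : ℕ)

def fanoIndex : ℕ := 1 + ∑ i ∈ univ.filter p, w i

def hypersurfaceDegree : ℕ := c + ∑ i ∈ univ.filter (fun i => ¬p i), w i

/- The variables are indexed by `ι`: those satisfying `p` are the `xᵢ`, the others the `yⱼ`, and `c`
is the weight `wₙ` of the coordinate `yₙ` set to `1` in the chart. -/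
noncomputable def hypersurfaceLGModel (R : Type*) [CommSemiring R] :
    AddMonoidAlgebra R (ι →₀ ℤ) :=
  ((∑ i ∈ univ.filter (fun i => ¬p i), single (Finsupp.single i 1) (1 : R)) + 1) ^
      hypersurfaceDegree p w c * single (Finsupp.equivFunOnFinite.symm fun i => -(w i : ℤ)) 1
    + ∑ i ∈ univ.filter p, single (Finsupp.single i 1) 1

/- Exponents of the summands of `Y = ∑ yⱼ + 1`, the constant summand being indexed by `none`. -/
noncomputable def ySummandExponent : Option ι → ι →₀ ℤ
  | none => 0
  | some i => Finsupp.single i 1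

lemma sum_single_add_one_eq_sum_insertNone (R : Type*) [CommSemiring R] :
    (∑ i ∈ univ.filter (fun i => ¬p i), single (Finsupp.single i 1) (1 : R)) + 1 =
      ∑ o ∈ insertNone (univ.filter fun i => ¬p i), single (ySummandExponent o) 1 := by
  rw [sum_insertNone, ySummandExponent, ← one_def, add_comm]
  rfl

def constantTermXExponents (m : ℕ) (i : ι) : ℕ := if p i then w i * m else 0

def constantTermYExponents (m : ℕ) : Option ι → ℕ
  | none => c * m
  | some i => if p i then 0 else w i * m

lemma sum_constantTermXExponents (m : ℕ) :
    ∑ i ∈ univ.filter p, constantTermXExponents p w m i = fanoIndex p w * m - m := by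
  rw [fanoIndex, add_mul, one_mul, Nat.add_sub_cancel_left, sum_mul]
  exact sum_congr rfl fun i hi => if_pos (mem_filter.1 hi).2

lemma sum_constantTermYExponents (m : ℕ) :
    ∑ o ∈ insertNone (univ.filter fun i => ¬p i), constantTermYExponents p w c m o =
      hypersurfaceDegree p w c * m := by
  rw [hypersurfaceDegree, sum_insertNone, add_mul, sum_mul]
  exact congrArg _ (sum_congr rfl fun i hi => if_neg (mem_filter.1 hi).2)

lemma choose_mul_multinomial_mul_multinomial_mul_factorials (m : ℕ) :
    (fanoIndex p w * m).choose m
        * Nat.multinomial (insertNone (univ.filter fun i => ¬p i)) (constantTermYExponents p w c m)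
        * Nat.multinomial (univ.filter p) (constantTermXExponents p w m)
        * (m ! * (c * m)! * ∏ i, (w i * m)!) =
      (fanoIndex p w * m)! * (hypersurfaceDegree p w c * m)! := by
  have hm : m ≤ fanoIndex p w * m := Nat.le_mul_of_pos_left m (by simp [fanoIndex])
  have hx : ∏ i ∈ univ.filter p, (constantTermXExponents p w m i)! =
      ∏ i ∈ univ.filter p, (w i * m)! :=
    prod_congr rfl fun i hi => by rw [constantTermXExponents, if_pos (mem_filter.1 hi).2]
  have hy : ∏ i ∈ univ.filter (fun i => ¬p i), (constantTermYExponents p w c m (some i))! =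
      ∏ i ∈ univ.filter (fun i => ¬p i), (w i * m)! :=
    prod_congr rfl fun i hi => by rw [constantTermYExponents, if_neg (mem_filter.1 hi).2]
  rw [← Nat.choose_mul_factorial_mul_factorial hm, ← sum_constantTermXExponents,
    ← sum_constantTermYExponents, ← Nat.multinomial_spec, ← Nat.multinomial_spec, prod_insertNone,
    hx, hy, ← prod_filter_mul_prod_filter_not univ p, constantTermYExponents]
  ring

lemma eq_of_mul_sum_eq_fanoIndex_mul_sub {k m : ℕ} (hk : k ≤ fanoIndex p w * m)
    (h : k * ∑ i ∈ univ.filter p, w i = fanoIndex p w * m - k) : k = m := by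
  unfold fanoIndex at hk h
  generalize ∑ i ∈ univ.filter p, w i = W at hk h
  refine Nat.eq_of_mul_eq_mul_left (by omega : 0 < 1 + W) ?_
  zify [hk] at h ⊢
  linear_combination h

variable [DecidableEq ι]

lemma sum_ySummandExponent_apply (b : Option ι → ℕ) (j : ι) :
    (∑ o ∈ insertNone (univ.filter fun i => ¬p i), b o • ySummandExponent o) j =
      if p j then 0 else (b (some j) : ℤ) := by
  rw [sum_insertNone]
  simp only [ySummandExponent, smul_zero, zero_add]
  rw [Finsupp.sum_nsmul_single_one_apply]
  simp only [mem_filter, mem_univ, true_and, ite_not]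

/- The exponent of the term indexed by `(k, b, a)` in the expansion of a power of the model given by
`sum_pow_mul_single_add_sum_pow`. -/
noncomputable def termExponent (k : ℕ) (b : Option ι → ℕ) (a : ι → ℕ) : ι →₀ ℤ :=
  ∑ o ∈ insertNone (univ.filter fun i => ¬p i), b o • ySummandExponent o
    + k • Finsupp.equivFunOnFinite.symm (fun i => -(w i : ℤ))
    + ∑ i ∈ univ.filter p, a i • Finsupp.single i 1

lemma termExponent_apply (k : ℕ) (b : Option ι → ℕ) (a : ι → ℕ) (j : ι) :
    termExponent p w k b a j = (if p j then a j else b (some j) : ℕ) - k * w j := by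
  rw [termExponent, Finsupp.add_apply, Finsupp.add_apply, sum_ySummandExponent_apply,
    Finsupp.smul_apply, Finsupp.sum_nsmul_single_one_apply, Finsupp.coe_equivFunOnFinite_symm]
  by_cases hj : p j <;> simp [hj] <;> ring

lemma termExponent_eq_zero_iff_forall (k : ℕ) (b : Option ι → ℕ) (a : ι → ℕ) :
    termExponent p w k b a = 0 ↔ ∀ j, (if p j then a j else b (some j)) = k * w j := by
  simp only [Finsupp.ext_iff, termExponent_apply, Finsupp.coe_zero, Pi.zero_apply, sub_eq_zero,
    ← Nat.cast_mul, Nat.cast_inj]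

variable {c} in
lemma termExponent_eq_zero_iff {m k : ℕ} (hk : k ≤ fanoIndex p w * m) {b : Option ι → ℕ}
    (hb : b ∈ (insertNone (univ.filter fun i => ¬p i)).piAntidiag (hypersurfaceDegree p w c * k))
    {a : ι → ℕ} (ha : a ∈ (univ.filter p).piAntidiag (fanoIndex p w * m - k)) :
    termExponent p w k b a = 0 ↔
      k = m ∧ b = constantTermYExponents p w c m ∧ a = constantTermXExponents p w m := by
  rw [termExponent_eq_zero_iff_forall]
  rw [mem_piAntidiag] at ha hb
  refine ⟨fun h => ?_, ?_⟩
  swap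
  · rintro ⟨rfl, rfl, rfl⟩ j
    by_cases hj : p j <;> simp [hj, constantTermXExponents, constantTermYExponents, mul_comm]
  have hx : ∀ i ∈ univ.filter p, a i = k * w i := fun i hi => by
    simpa [(mem_filter.1 hi).2] using h i
  have hy : ∀ i ∈ univ.filter (fun i => ¬p i), b (some i) = k * w i := fun i hi => by
    simpa [(mem_filter.1 hi).2] using h i
  obtain rfl : k = m :=
    eq_of_mul_sum_eq_fanoIndex_mul_sub p w hk (by rw [mul_sum, ← sum_congr rfl hx, ha.1])
  refine ⟨rfl, funext fun o => ?_, funext fun i => ?_⟩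
  · cases o with
    | none =>
      have hsum := hb.1
      rw [sum_insertNone, sum_congr rfl hy, ← mul_sum, hypersurfaceDegree] at hsum
      rw [constantTermYExponents]
      linarith
    | some i =>
      by_cases hi : p i
      · rw [constantTermYExponents, if_pos hi]
        by_contra hne
        simpa [hi] using hb.2 _ hne
      · simpa [constantTermYExponents, hi, mul_comm] using hy i (by simpa using hi)
  · by_cases hi : p i
    · simpa [constantTermXExponents, hi, mul_comm] using hx i (by simpa using hi)
    · rw [constantTermXExponents, if_neg hi]
      by_contra hne
      simpa [hi] using ha.2 _ hne

lemma constantTermXExponents_mem_piAntidiag (m : ℕ) :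
    constantTermXExponents p w m ∈ (univ.filter p).piAntidiag (fanoIndex p w * m - m) :=
  mem_piAntidiag.2 ⟨sum_constantTermXExponents p w m, fun i hi => by
    by_contra h
    simp_all [constantTermXExponents]⟩

lemma constantTermYExponents_mem_piAntidiag (m : ℕ) :
    constantTermYExponents p w c m ∈
      (insertNone (univ.filter fun i => ¬p i)).piAntidiag (hypersurfaceDegree p w c * m) :=
  mem_piAntidiag.2 ⟨sum_constantTermYExponents p w c m, fun o ho => by
    cases o with
    | none => simp
    | some i => simp_all [constantTermYExponents]⟩

theorem hypersurfaceLGModel_pow_coeff_zero (R : Type*) [CommSemiring R] (m : ℕ) :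
    ((hypersurfaceLGModel p w c R) ^ (fanoIndex p w * m)).coeff 0 =
      ((fanoIndex p w * m).choose m
        * Nat.multinomial (insertNone (univ.filter fun i => ¬p i)) (constantTermYExponents p w c m)
        * Nat.multinomial (univ.filter p) (constantTermXExponents p w m) : ℕ) := by
  have hm : m ≤ fanoIndex p w * m := Nat.le_mul_of_pos_left m (by simp [fanoIndex])
  rw [hypersurfaceLGModel, sum_single_add_one_eq_sum_insertNone, sum_pow_mul_single_add_sum_pow]
  simp only [coeff_sum, Finsupp.finsetSum_apply, coeff_single, Finsupp.single_apply,
    ← termExponent.eq_1]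
  rw [sum_eq_single_of_mem m (mem_range.2 (by omega)) ?_,
    sum_eq_single_of_mem _ (constantTermYExponents_mem_piAntidiag p w c m) ?_,
    sum_eq_single_of_mem _ (constantTermXExponents_mem_piAntidiag p w m) ?_,
    if_pos ((termExponent_eq_zero_iff p w hm (constantTermYExponents_mem_piAntidiag p w c m)
      (constantTermXExponents_mem_piAntidiag p w m)).2 ⟨rfl, rfl, rfl⟩)]
  · push_cast
    ring
  · exact fun a ha hne => if_neg fun h => hne ((termExponent_eq_zero_iff p w hm
      (constantTermYExponents_mem_piAntidiag p w c m) ha).1 h).2.2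
  · exact fun b hb hne => sum_eq_zero fun a ha => if_neg fun h => hne
      ((termExponent_eq_zero_iff p w hm hb ha).1 h).2.1
  · intro k hk hne
    have hk : k ≤ fanoIndex p w * m := Nat.lt_succ_iff.1 (mem_range.1 hk)
    exact sum_eq_zero fun b hb => sum_eq_zero fun a ha => if_neg fun h => hne
      ((termExponent_eq_zero_iff p w hk hb ha).1 h).1

theorem hypersurfaceLGModel_pow_coeff_zero_eq_div (K : Type*) [Field K] [CharZero K] (m : ℕ) :
    ((hypersurfaceLGModel p w c K) ^ (fanoIndex p w * m)).coeff 0 =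
      ((fanoIndex p w * m)! * (hypersurfaceDegree p w c * m)! : K) /
        ((m ! : K) * (c * m)! * ∏ i, ((w i * m)! : K)) := by
  rw [eq_div_iff (by simp [prod_ne_zero_iff, Nat.factorial_ne_zero]),
    hypersurfaceLGModel_pow_coeff_zero]
  exact_mod_cast choose_mul_multinomial_mul_multinomial_mul_factorials p w c m

end HypersurfaceLGModel

theorem Fin.sum_filter_univ_eq_sum_filter_range {M : Type*} [AddCommMonoid M] (k : ℕ)
    (q : ℕ → Prop) [DecidablePred q] (f : ℕ → M) :
    ∑ j ∈ univ.filter (fun j : Fin k => q j), f j = ∑ i ∈ (range k).filter q, f i := by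
  rw [sum_filter, sum_filter]
  exact Fin.sum_univ_eq_sum_range (fun i => if q i then f i else 0) k

theorem Finset.prod_range_add_one_eq_mul_mul_prod_fin {M : Type*} [CommMonoid M] (f : ℕ → M)
    {n : ℕ} (hn : 1 ≤ n) :
    ∏ j ∈ range (n + 1), f j = f 0 * f n * ∏ j : Fin (n - 1), f (j + 1) := by
  rw [Fin.prod_univ_eq_prod_range (fun j => f (j + 1))]
  obtain ⟨k, rfl⟩ : ∃ k, n = k + 1 := ⟨n - 1, by omega⟩
  rw [prod_range_succ, prod_range_succ', Nat.add_sub_cancel]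
  exact mul_rotate _ _ _

lemma fanoIndex_fin_val_lt (w : ℕ → ℕ) (hw0 : w 0 = 1) {r k : ℕ} (hr : r ≤ k) :
    fanoIndex (fun j : Fin k => (j : ℕ) < r) (fun j => w (j + 1)) = ∑ j ∈ Icc 0 r, w j := by
  have hS : (range k).filter (· < r) = range r := by
    ext i
    simp only [mem_filter, mem_range]
    omega
  rw [fanoIndex, Fin.sum_filter_univ_eq_sum_filter_range k (· < r) (fun i => w (i + 1)), hS,
    ← Nat.range_succ_eq_Icc_zero, sum_range_succ', hw0, add_comm]

lemma hypersurfaceDegree_fin_val_lt (w : ℕ → ℕ) {r n : ℕ} (hr : r < n) :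
    hypersurfaceDegree (fun j : Fin (n - 1) => (j : ℕ) < r) (fun j => w (j + 1)) (w n) =
      ∑ j ∈ Icc (r + 1) n, w j := by
  have hT : (range (n - 1)).filter (fun i => ¬i < r) = Ico r (n - 1) := by
    ext i
    simp only [mem_filter, mem_range, mem_Ico]
    omega
  rw [hypersurfaceDegree,
    Fin.sum_filter_univ_eq_sum_filter_range (n - 1) (fun i => ¬i < r) (fun i => w (i + 1)), hT,
    sum_Ico_add', Nat.sub_add_cancel (by omega : 1 ≤ n), ← Ico_add_one_right_eq_Icc,
    sum_Ico_succ_top (by omega : r + 1 ≤ n), add_comm]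

theorem constant_terms_of_weighted_hypersurface_LG_model_general
    (n r : ℕ) (hr : r < n)
    (w : ℕ → ℕ) (hw0 : w 0 = 1)
    (d1 d0 : ℕ)
    (hd1 : d1 = ∑ j ∈ Finset.Icc (r + 1) n, w j)
    (hd0 : d0 = ∑ j ∈ Finset.Icc 0 r, w j)
    (f : AddMonoidAlgebra ℚ (Fin (n - 1) →₀ ℤ))
    (hf : f =
      ((∑ j ∈ Finset.univ.filter (fun j : Fin (n - 1) => r ≤ (j : ℕ)),
          AddMonoidAlgebra.single (Finsupp.single j 1) (1 : ℚ)) + 1) ^ d1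
        * AddMonoidAlgebra.single
            (Finsupp.equivFunOnFinite.symm fun j : Fin (n - 1) => -(w ((j : ℕ) + 1) : ℤ))
            (1 : ℚ)
      + ∑ j ∈ Finset.univ.filter (fun j : Fin (n - 1) => (j : ℕ) < r),
          AddMonoidAlgebra.single (Finsupp.single j 1) (1 : ℚ)) :
    ∀ m : ℕ,
      (f ^ (d0 * m)).coeff 0 =
        (((d0 * m).factorial : ℚ) * ((d1 * m).factorial : ℚ)) /
          ∏ j ∈ Finset.range (n + 1), ((w j * m).factorial : ℚ) := by
  intro m
  have hf' : f = hypersurfaceLGModel (fun j : Fin (n - 1) => (j : ℕ) < r) (fun j => w (j + 1))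
      (w n) ℚ := by
    rw [hf, hypersurfaceLGModel, hypersurfaceDegree_fin_val_lt w hr, ← hd1]
    simp only [not_lt]
  rw [hf', hd0, hd1, ← fanoIndex_fin_val_lt w hw0 (by omega : r ≤ n - 1),
    ← hypersurfaceDegree_fin_val_lt w hr,
    prod_range_add_one_eq_mul_mul_prod_fin (fun j => ((w j * m)! : ℚ)) (by omega), hw0, one_mul]
  exact hypersurfaceLGModel_pow_coeff_zero_eq_div _ _ _ ℚ m

/-- Let `w_0 = 1, w_1, …, w_n` be positive integers, `0 ≤ r < n`,
`d_1 = w_{r+1} + … + w_n` and `d_0 = w_0 + … + w_r`. The Laurent polynomial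
`f = (y_{r+1} + … + y_{n-1} + 1)^{d_1} · x_1^{-w_1} ⋯ x_r^{-w_r} ·
y_{r+1}^{-w_{r+1}} ⋯ y_{n-1}^{-w_{n-1}} + x_1 + … + x_r`
(an element of the monoid algebra of `ℚ` over `Fin (n-1) →₀ ℤ`, the variable indexed by
`j : Fin (n-1)` being `x_{j+1}` if `j + 1 ≤ r` and `y_{j+1}` if `j + 1 ≥ r + 1`)
has the constant term of `f ^ (d_0 · m)` equal to
`(d_0 m)! (d_1 m)! / ((w_0 m)! ⋯ (w_n m)!)` for every natural number `m`. -/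
theorem constant_terms_of_weighted_hypersurface_LG_model
    (n r : ℕ) (hn : 2 ≤ n) (hr : r < n)
    (w : ℕ → ℕ) (hwpos : ∀ j ≤ n, 0 < w j) (hw0 : w 0 = 1)
    (d1 d0 : ℕ)
    (hd1 : d1 = ∑ j ∈ Finset.Icc (r + 1) n, w j)
    (hd0 : d0 = ∑ j ∈ Finset.Icc 0 r, w j)
    (f : AddMonoidAlgebra ℚ (Fin (n - 1) →₀ ℤ))
    (hf : f =
      ((∑ j ∈ Finset.univ.filter (fun j : Fin (n - 1) => r ≤ (j : ℕ)),
          AddMonoidAlgebra.single (Finsupp.single j 1) (1 : ℚ)) + 1) ^ d1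
        * AddMonoidAlgebra.single
            (Finsupp.equivFunOnFinite.symm fun j : Fin (n - 1) => -(w ((j : ℕ) + 1) : ℤ))
            (1 : ℚ)
      + ∑ j ∈ Finset.univ.filter (fun j : Fin (n - 1) => (j : ℕ) < r),
          AddMonoidAlgebra.single (Finsupp.single j 1) (1 : ℚ)) :
    ∀ m : ℕ,
      (f ^ (d0 * m)).coeff 0 =
        (((d0 * m).factorial : ℚ) * ((d1 * m).factorial : ℚ)) /
          ∏ j ∈ Finset.range (n + 1), ((w j * m).factorial : ℚ) :=
  constant_terms_of_weighted_hypersurface_LG_model_general n r hr w hw0 d1 d0 hd1 hd0 f hf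
end

section
/- Let n ≥ 2 and 0 ≤ r < n be integers and let w_0, w_1, …, w_n be positive integers with w_0 = 1. Set d_1 = w_{r+1} + … + w_n and d_0 = w_0 + w_1 + … + w_r. Consider the multivariate Laurent polynomial over ℚ in the variables x_1,…,x_r, y_{r+1},…,y_{n−1} given by f = (y_{r+1} + … + y_{n−1} + 1)^{d_1} · x_1^{−w_1} ⋯ x_r^{−w_r} · y_{r+1}^{−w_{r+1}} ⋯ y_{n−1}^{−w_{n−1}} + x_1 + … + x_r. Then for every natural number N that is not divisible by d_0, the constant term (the coefficient of the zero exponent vector) of f^N equals 0. -/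
/-!
Give the variable `x_j` degree `1` and every `y_j` degree `0`, and read degrees modulo `d_0`.
The monomial `x^{-w} y^{-w}` then has degree `-(w_1 + … + w_r) = w_0 - d_0 ≡ 1`, so every
monomial of `f` has degree `1` and every monomial of `f ^ N` has degree `N`. The constant
monomial has degree `0`, so it can occur in `f ^ N` only if `d_0 ∣ N`.
-/

open Finset AddMonoidAlgebra

namespace AddMonoidAlgebra

variable {R M ι : Type*} [CommSemiring R]

theorem single_mem_gradeBy_of_eq {f : M → ι} {m : M} {i : ι} (h : f m = i) (r : R) :
    single m r ∈ gradeBy R f i :=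
  h ▸ single_mem_gradeBy f m r

theorem coeff_eq_zero_of_mem_gradeBy {f : M → ι} {i : ι} {a : R[M]} (ha : a ∈ gradeBy R f i)
    {m : M} (hm : f m ≠ i) : a.coeff m = 0 :=
  Finsupp.notMem_support_iff.mp fun h => hm ((mem_gradeBy_iff R f i a).mp ha h)

end AddMonoidAlgebra

noncomputable def lowerDegreeMod (r d m : ℕ) : (Fin m →₀ ℤ) →+ ZMod d :=
  ∑ j ∈ univ.filter (fun j : Fin m => (j : ℕ) < r),
    (Int.castAddHom (ZMod d)).comp (Finsupp.applyAddHom j)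

section lowerDegreeMod

variable {r d m : ℕ}

theorem lowerDegreeMod_apply (x : Fin m →₀ ℤ) :
    lowerDegreeMod r d m x =
      ∑ j ∈ univ.filter (fun j : Fin m => (j : ℕ) < r), (x j : ZMod d) := by
  simp [lowerDegreeMod, AddMonoidHom.finsetSum_apply]

theorem lowerDegreeMod_single_one (j : Fin m) :
    lowerDegreeMod r d m (Finsupp.single j 1) = if (j : ℕ) < r then 1 else 0 := by
  simp [lowerDegreeMod_apply, Finsupp.single_apply]

theorem lowerDegreeMod_equivFunOnFinite_symm (hr : r ≤ m) (g : ℕ → ℤ) :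
    lowerDegreeMod r d m (Finsupp.equivFunOnFinite.symm fun j : Fin m => g j) =
      ∑ i ∈ range r, (g i : ZMod d) := by
  rw [lowerDegreeMod_apply, Finsupp.coe_equivFunOnFinite_symm, sum_filter,
    Fin.sum_univ_eq_sum_range (fun i => if i < r then (g i : ZMod d) else 0),
    ← sum_filter, (by ext; simp; omega : (range m).filter (· < r) = range r)]

end lowerDegreeMod

theorem sum_Icc_zero_eq_add_sum_range (w : ℕ → ℕ) (r : ℕ) :
    ∑ j ∈ Icc 0 r, w j = w 0 + ∑ i ∈ range r, w (i + 1) := by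
  rw [← Nat.range_succ_eq_Icc_zero, sum_range_succ', add_comm]

theorem constant_terms_vanish_off_fano_index_multiples_general
    (n r : ℕ) (hr : r < n)
    (w : ℕ → ℕ) (hw0 : w 0 = 1)
    (d1 d0 : ℕ)
    (hd0 : d0 = ∑ j ∈ Finset.Icc 0 r, w j)
    (f : AddMonoidAlgebra ℚ (Fin (n - 1) →₀ ℤ))
    (hf : f =
      ((∑ j ∈ Finset.univ.filter (fun j : Fin (n - 1) => r ≤ (j : ℕ)),
          AddMonoidAlgebra.single (Finsupp.single j 1) (1 : ℚ)) + 1) ^ d1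
        * AddMonoidAlgebra.single
            (Finsupp.equivFunOnFinite.symm fun j : Fin (n - 1) => -(w ((j : ℕ) + 1) : ℤ))
            (1 : ℚ)
      + ∑ j ∈ Finset.univ.filter (fun j : Fin (n - 1) => (j : ℕ) < r),
          AddMonoidAlgebra.single (Finsupp.single j 1) (1 : ℚ)) :
    ∀ N : ℕ, ¬ d0 ∣ N → (f ^ N).coeff 0 = 0 := by
  intro N hN
  set deg := lowerDegreeMod r d0 (n - 1)
  have hy : ∀ j ∈ univ.filter (fun j : Fin (n - 1) => r ≤ (j : ℕ)),
      single (Finsupp.single j 1) (1 : ℚ) ∈ gradeBy ℚ deg 0 := fun j hj =>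
    single_mem_gradeBy_of_eq (by simp_all [deg, lowerDegreeMod_single_one]) 1
  have hx : ∀ j ∈ univ.filter (fun j : Fin (n - 1) => (j : ℕ) < r),
      single (Finsupp.single j 1) (1 : ℚ) ∈ gradeBy ℚ deg 1 := fun j hj =>
    single_mem_gradeBy_of_eq (by simp_all [deg, lowerDegreeMod_single_one]) 1
  have hv : deg (Finsupp.equivFunOnFinite.symm fun j : Fin (n - 1) => -(w ((j : ℕ) + 1) : ℤ)) =
      1 := by
    have hd0' : ((w 0 + ∑ i ∈ range r, w (i + 1) : ℕ) : ZMod d0) = 0 := by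
      rw [← sum_Icc_zero_eq_add_sum_range, ← hd0, ZMod.natCast_self]
    rw [lowerDegreeMod_equivFunOnFinite_symm (by omega) fun i => -(w (i + 1) : ℤ)]
    push_cast [hw0, sum_neg_distrib] at hd0' ⊢
    linear_combination -hd0'
  have hf1 : f ∈ gradeBy ℚ deg 1 := by
    have hA := add_mem (Submodule.sum_mem _ hy) (SetLike.one_mem_graded (gradeBy ℚ deg))
    have hAv :=
      SetLike.mul_mem_graded (SetLike.pow_mem_graded d1 hA) (single_mem_gradeBy_of_eq hv 1)
    rw [smul_zero, zero_add] at hAv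
    exact hf ▸ add_mem hAv (Submodule.sum_mem _ hx)
  have hfN : f ^ N ∈ gradeBy ℚ deg (N : ZMod d0) := by
    simpa using SetLike.pow_mem_graded N hf1
  refine coeff_eq_zero_of_mem_gradeBy hfN ?_
  rwa [map_zero, ne_comm, Ne, ZMod.natCast_eq_zero_iff]

/-- With the same Laurent polynomial `f` as in Statement 3
(the Hori–Vafa weak Landau–Ginzburg model of a degree `d_1 = w_{r+1} + … + w_n`
hypersurface in `P(w_0, …, w_n)`, with Fano index `d_0 = w_0 + … + w_r`),
the constant term of `f ^ N` vanishes whenever `d_0` does not divide `N`. -/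
theorem constant_terms_vanish_off_fano_index_multiples
    (n r : ℕ) (hn : 2 ≤ n) (hr : r < n)
    (w : ℕ → ℕ) (hwpos : ∀ j ≤ n, 0 < w j) (hw0 : w 0 = 1)
    (d1 d0 : ℕ)
    (hd1 : d1 = ∑ j ∈ Finset.Icc (r + 1) n, w j)
    (hd0 : d0 = ∑ j ∈ Finset.Icc 0 r, w j)
    (f : AddMonoidAlgebra ℚ (Fin (n - 1) →₀ ℤ))
    (hf : f =
      ((∑ j ∈ Finset.univ.filter (fun j : Fin (n - 1) => r ≤ (j : ℕ)),
          AddMonoidAlgebra.single (Finsupp.single j 1) (1 : ℚ)) + 1) ^ d1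
        * AddMonoidAlgebra.single
            (Finsupp.equivFunOnFinite.symm fun j : Fin (n - 1) => -(w ((j : ℕ) + 1) : ℤ))
            (1 : ℚ)
      + ∑ j ∈ Finset.univ.filter (fun j : Fin (n - 1) => (j : ℕ) < r),
          AddMonoidAlgebra.single (Finsupp.single j 1) (1 : ℚ)) :
    ∀ N : ℕ, ¬ d0 ∣ N → (f ^ N).coeff 0 = 0 :=
  constant_terms_vanish_off_fano_index_multiples_general n r hr w hw0 d1 d0 hd0 f hf
end

section
/- Let n ≥ 1 and k ≥ 1 be integers and let w_0, w_1, …, w_n be positive integers with w_0 = 1. Let I_1, …, I_k be pairwise disjoint nonempty subsets of {1,…,n} such that w_j = 1 for every j ∈ {0,…,n} not lying in I_1 ∪ … ∪ I_k; set d_i = ∑_{j ∈ I_i} w_j for i = 1,…,k and d_0 = (w_0 + … + w_n) − (d_1 + … + d_k). For each i choose an element ν_i ∈ I_i. Consider the multivariate Laurent polynomial over ℚ in the n − k variables indexed by {1,…,n} \ {ν_1,…,ν_k} given by f = T + ∑_j x_j, where the second sum runs over all j ∈ {1,…,n} outside I_1 ∪ … ∪ I_k, and T = [∏_{i=1}^k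 (1 + ∑_{j ∈ I_i, j ≠ ν_i} x_j)^{d_i}] · ∏_j x_j^{−w_j}, the last product running over all j ∈ {1,…,n} \ {ν_1,…,ν_k}. Then for every natural number m, the constant term (coefficient of the zero exponent vector) of f^{d_0 · m} equals (d_0 m)! · (d_1 m)! ⋯ (d_k m)! / ((w_0 m)! · (w_1 m)! ⋯ (w_n m)!). -/
/-!
Write `f = T · x^{-w} + ∑_{j ∈ F} x_j`, where `F` is the set of free variables (those outside every
`I_i`) and `T = ∏_i (1 + ∑_{j ∈ B_i} x_j)^{d_i}` only involves the block variables
`B_i = I_i \ {ν_i}`. In the binomial expansion of `f^{d_0 m}`, the term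
`T^a x^{-a w} (∑_{j ∈ F} x_j)^{d_0 m - a}` can only contribute to the constant term if every free
variable occurs with exponent `a` in the last factor, i.e. `|F| a = d_0 m - a`; since
`d_0 = |F| + 1` this forces `a = m`. What is left is `binom(d_0 m, m)` times a multinomial
coefficient for the free variables times the coefficient of `x^{m w}` in `T^m`. The blocks use
disjoint sets of variables, so this last coefficient is the product over `i` of the coefficients
of `x^{m w|_{B_i}}` in `(1 + ∑_{j ∈ B_i} x_j)^{d_i m}`, each a binomial times a multinomial
coefficient. Writing all of these as quotients of factorials gives the formula.
-/

open Function

namespace AddMonoidAlgebra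

variable {R A : Type*} [Semiring R]

variable (R) in
noncomputable def supportedSubsemiring [AddMonoid A] (M : AddSubmonoid A) :
    Subsemiring (AddMonoidAlgebra R A) where
  carrier := {x | ∀ a ∈ x.coeff.support, a ∈ M}
  mul_mem' {x y} hx hy c hc := by
    classical
    obtain ⟨a, ha, b, hb, rfl⟩ := Finset.mem_add.1 (support_coeff_mul_subset x y hc)
    exact M.add_mem (hx a ha) (hy b hb)
  one_mem' a ha := by
    rw [Finset.mem_zero.1 (support_coeff_one_subset ha)]
    exact M.zero_mem
  add_mem' {x y} hx hy c hc := by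
    classical
    rw [coeff_add] at hc
    exact (Finset.mem_union.1 (Finsupp.support_add hc)).elim (hx c) (hy c)
  zero_mem' := by simp

lemma coeff_mul_add_of_disjoint [AddGroup A] {M N : AddSubgroup A} (hMN : Disjoint M N)
    {x y : AddMonoidAlgebra R A} (hx : x ∈ supportedSubsemiring R M.toAddSubmonoid)
    (hy : y ∈ supportedSubsemiring R N.toAddSubmonoid) {a b : A} (ha : a ∈ M) (hb : b ∈ N) :
    (x * y).coeff (a + b) = x.coeff a * y.coeff b := by
  refine coeff_mul_add_of_uniqueAdd fun a' b' ha' hb' hab => ?_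
  have hM : -a + a' ∈ M := M.add_mem (M.neg_mem ha) (hx a' ha')
  have hN : -a + a' = b + -b' := by
    rw [neg_add_eq_iff_eq_add, ← add_assoc, ← hab, add_neg_cancel_right]
  have h0 := AddSubgroup.disjoint_def.1 hMN hM (hN ▸ N.add_mem hb (N.neg_mem (hy b' hb')))
  rw [neg_add_eq_zero] at h0
  subst h0
  exact ⟨rfl, add_left_cancel hab⟩

end AddMonoidAlgebra

lemma Nat.cast_choose_sum_mul_multinomial {K ι : Type*} [Field K] [CharZero K] (s : Finset ι)
    (b : ι → ℕ) {e : ℕ} (h : ∑ j ∈ s, b j ≤ e) :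
    (e.choose (∑ j ∈ s, b j) * Nat.multinomial s b : K) =
      e.factorial / ((e - ∑ j ∈ s, b j).factorial * ∏ j ∈ s, ((b j).factorial : K)) := by
  have hspec : (∏ j ∈ s, ((b j).factorial : K)) * Nat.multinomial s b =
      (∑ j ∈ s, b j).factorial := by
    exact_mod_cast Nat.multinomial_spec s b
  have hprod : (∏ j ∈ s, ((b j).factorial : K)) ≠ 0 :=
    Finset.prod_ne_zero_iff.2 fun j _ => Nat.cast_ne_zero.2 (Nat.factorial_ne_zero _)
  have hmult : (Nat.multinomial s b : K) ≠ 0 := Nat.cast_ne_zero.2 (Nat.multinomial_pos s b).ne'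
  rw [Nat.cast_choose K h, ← hspec]
  field_simp

open AddMonoidAlgebra

namespace LGModel

variable {R : Type*} [CommSemiring R] {σ : Type*}

noncomputable def X (j : σ) : AddMonoidAlgebra R (σ →₀ ℤ) :=
  single (Finsupp.single j 1) 1

noncomputable def natExp [Finite σ] : (σ → ℕ) →+ (σ →₀ ℤ) :=
  Finsupp.addEquivFunOnFinite.symm.toAddMonoidHom.comp
    (AddMonoidHom.compLeft (Nat.castAddMonoidHom ℤ) σ)

@[simp]
lemma natExp_apply [Finite σ] (b : σ → ℕ) (j : σ) : natExp b j = b j := rfl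

lemma natExp_injective [Finite σ] : Injective (natExp : (σ → ℕ) → σ →₀ ℤ) :=
  fun b c h => funext fun j => by simpa using DFunLike.congr_fun h j

lemma natExp_mem_supported [Finite σ] {D : Set σ} {b : σ → ℕ} (hb : ∀ j ∉ D, b j = 0) :
    natExp b ∈ Finsupp.supported ℤ ℤ D :=
  (Finsupp.mem_supported' _ _).2 fun j hj => by simp [hb j hj]

variable (R) in
noncomputable def laurentIn (D : Set σ) : Subsemiring (AddMonoidAlgebra R (σ →₀ ℤ)) :=
  supportedSubsemiring R (Finsupp.supported ℤ ℤ D).toAddSubgroup.toAddSubmonoid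

lemma laurentIn_mono {D D' : Set σ} (h : D ⊆ D') : laurentIn R D ≤ laurentIn R D' :=
  fun _ hx u hu => Finsupp.supported_mono (M := ℤ) (R := ℤ) h (hx u hu)

lemma sum_X_mem_laurentIn (s : Finset σ) :
    ∑ j ∈ s, (X j : AddMonoidAlgebra R (σ →₀ ℤ)) ∈ laurentIn R s :=
  Subsemiring.sum_mem _ fun j hj u hu => by
    rw [Finset.mem_singleton.1 (Finsupp.support_single_subset hu)]
    exact Finsupp.single_mem_supported (M := ℤ) ℤ 1 hj

lemma coeff_mul_add_of_disjoint_vars {D₁ D₂ : Set σ} (hD : Disjoint D₁ D₂)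
    {g h : AddMonoidAlgebra R (σ →₀ ℤ)} (hg : g ∈ laurentIn R D₁) (hh : h ∈ laurentIn R D₂)
    {u v : σ →₀ ℤ} (hu : u ∈ Finsupp.supported ℤ ℤ D₁) (hv : v ∈ Finsupp.supported ℤ ℤ D₂) :
    (g * h).coeff (u + v) = g.coeff u * h.coeff v :=
  coeff_mul_add_of_disjoint (AddSubgroup.disjoint_def.2 fun hx hy =>
    Submodule.disjoint_def.1 (Finsupp.disjoint_supported_supported (M := ℤ) (R := ℤ) hD) _ hx hy)
    hg hh hu hv

lemma coeff_prod_sum_of_pairwiseDisjoint {ι : Type*} [DecidableEq ι] {t : Finset ι}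
    {D : ι → Set σ} (hD : (t : Set ι).PairwiseDisjoint D)
    {g : ι → AddMonoidAlgebra R (σ →₀ ℤ)} (hg : ∀ i ∈ t, g i ∈ laurentIn R (D i))
    {u : ι → σ →₀ ℤ} (hu : ∀ i ∈ t, u i ∈ Finsupp.supported ℤ ℤ (D i)) :
    (∏ i ∈ t, g i).coeff (∑ i ∈ t, u i) = ∏ i ∈ t, (g i).coeff (u i) := by
  induction t using Finset.induction_on with
  | empty => simp [one_def]
  | @insert a t ha ih =>
    simp only [Finset.mem_insert, forall_eq_or_imp] at hg hu
    have hdisj : Disjoint (D a) (⋃ i ∈ t, D i) :=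
      Set.disjoint_iUnion₂_right.2 fun i hi => hD (by simp) (by simp [hi])
        (ne_of_mem_of_not_mem hi ha).symm
    rw [Finset.prod_insert ha, Finset.sum_insert ha, Finset.prod_insert ha,
      coeff_mul_add_of_disjoint_vars hdisj hg.1
        (Subsemiring.prod_mem _ fun i hi =>
          laurentIn_mono (Set.subset_biUnion_of_mem (u := D) hi) (hg.2 i hi)) hu.1
        (Submodule.sum_mem _ fun i hi =>
          Finsupp.supported_mono (M := ℤ) (R := ℤ) (Set.subset_biUnion_of_mem (u := D) hi)
            (hu.2 i hi)),
      ih (hD.subset (by simp)) hg.2 hu.2]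

section Coefficients

variable [Finite σ] [DecidableEq σ]

lemma prod_X_pow (s : Finset σ) (c : σ → ℕ) :
    ∏ j ∈ s, (X j : AddMonoidAlgebra R (σ →₀ ℤ)) ^ c j = single (natExp (s.piecewise c 0)) 1 := by
  simp only [X, single_pow, one_pow, prod_single, Finset.prod_const_one]
  congr 1
  ext j
  by_cases hj : j ∈ s <;> simp [Finsupp.finsetSum_apply, Finsupp.single_apply, hj]

lemma sum_X_pow (s : Finset σ) (e : ℕ) :
    (∑ j ∈ s, (X j : AddMonoidAlgebra R (σ →₀ ℤ))) ^ e =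
      ∑ c ∈ Finset.piAntidiag s e, single (natExp c) (Nat.multinomial s c : R) := by
  rw [Finset.sum_pow_eq_sum_piAntidiag]
  refine Finset.sum_congr rfl fun c hc => ?_
  have hcs : s.piecewise c 0 = c := by
    ext j
    by_cases hj : j ∈ s
    · simp [hj]
    · simp [hj, not_imp_comm.1 ((Finset.mem_piAntidiag.1 hc).2 j) hj]
  rw [prod_X_pow, hcs, natCast_def, single_mul_single, zero_add, mul_one]

lemma coeff_sum_X_pow (s : Finset σ) (e : ℕ) (b : σ → ℕ) :
    ((∑ j ∈ s, (X j : AddMonoidAlgebra R (σ →₀ ℤ))) ^ e).coeff (natExp (s.piecewise b 0)) =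
      if ∑ j ∈ s, b j = e then (Nat.multinomial s b : R) else 0 := by
  have hsum : ∑ j ∈ s, s.piecewise b 0 j = ∑ j ∈ s, b j :=
    Finset.sum_congr rfl fun j hj => Finset.piecewise_eq_of_mem _ _ _ hj
  have hsupp : ∀ j, s.piecewise b 0 j ≠ 0 → j ∈ s := fun j =>
    not_imp_comm.1 fun hj => Finset.piecewise_eq_of_notMem _ _ _ hj
  classical
  rw [sum_X_pow, coeff_sum, Finsupp.finsetSum_apply]
  simp only [coeff_single, Finsupp.single_apply, natExp_injective.eq_iff, Finset.sum_ite_eq',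
    Finset.mem_piAntidiag, hsum, and_iff_left hsupp,
    Nat.multinomial_congr fun j hj => Finset.piecewise_eq_of_mem s b 0 hj]

lemma coeff_one_add_sum_X_pow (s : Finset σ) (e : ℕ) (b : σ → ℕ) :
    ((1 + ∑ j ∈ s, (X j : AddMonoidAlgebra R (σ →₀ ℤ))) ^ e).coeff (natExp (s.piecewise b 0)) =
      e.choose (∑ j ∈ s, b j) * Nat.multinomial s b := by
  rw [add_comm, add_pow]
  simp only [one_pow, mul_one, coeff_sum, Finsupp.finsetSum_apply, natCast_def,
    coeff_mul_single_zero, coeff_sum_X_pow, ite_mul, zero_mul, Finset.sum_ite_eq,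
    Finset.mem_range, Nat.lt_succ_iff]
  split_ifs with h
  · exact mul_comm _ _
  · rw [Nat.choose_eq_zero_of_lt (not_le.1 h), Nat.cast_zero, zero_mul]

lemma coeff_prod_one_add_sum_X_pow {ι : Type*} [Fintype ι] [DecidableEq ι] {B : ι → Finset σ}
    (hB : Pairwise (Disjoint on B)) (a : ι → ℕ) (c : σ → ℕ) :
    (∏ i, (1 + ∑ j ∈ B i, (X j : AddMonoidAlgebra R (σ →₀ ℤ))) ^ a i).coeff
        (∑ i, natExp ((B i).piecewise c 0)) =
      ∏ i, ((a i).choose (∑ j ∈ B i, c j) * Nat.multinomial (B i) c : R) := by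
  rw [coeff_prod_sum_of_pairwiseDisjoint (D := fun i => (B i : Set σ))
    (fun i _ i' _ h => Finset.disjoint_coe.2 (hB h))
    (fun i _ => pow_mem (add_mem (one_mem _) (sum_X_mem_laurentIn _)) _)
    (fun i _ => natExp_mem_supported fun j hj => Finset.piecewise_eq_of_notMem _ _ _ hj)]
  exact Finset.prod_congr rfl fun i _ => coeff_one_add_sum_X_pow _ _ _

theorem coeff_zero_pow_mul_single_add_sum_X (F : Finset σ) {T : AddMonoidAlgebra R (σ →₀ ℤ)}
    (hT : T ∈ laurentIn R (↑F)ᶜ) {w : σ → ℕ} (hw : ∀ j ∈ F, w j = 1) (m : ℕ) :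
    ((T * single (-natExp w) 1 + ∑ j ∈ F, X j) ^ ((F.card + 1) * m)).coeff 0 =
      (T ^ m).coeff (natExp (F.piecewise 0 fun j => w j * m)) *
        (((F.card + 1) * m).choose m * Nat.multinomial F fun _ => m) := by
  set N := (F.card + 1) * m
  have hterm : ∀ a, ((T * single (-natExp w) 1) ^ a * (∑ j ∈ F, X j) ^ (N - a) *
      (N.choose a : AddMonoidAlgebra R (σ →₀ ℤ))).coeff 0 =
      (T ^ a).coeff (natExp (F.piecewise 0 fun j => w j * a)) *
        ((if F.card * a = N - a then (Nat.multinomial F fun _ => a : R) else 0) * N.choose a) := by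
    intro a
    have hsplit : a • natExp w =
        natExp (F.piecewise 0 fun j => w j * a) + natExp (F.piecewise (fun _ => a) 0) := by
      rw [← map_nsmul, ← map_add]
      congr 1
      funext j
      by_cases hj : j ∈ F <;> simp [hj, hw, mul_comm]
    rw [mul_pow, single_pow, one_pow, natCast_def, coeff_mul_single_zero, mul_right_comm,
      coeff_mul_single_apply, zero_add, smul_neg, neg_neg, mul_one, hsplit,
      coeff_mul_add_of_disjoint_vars disjoint_compl_left (pow_mem hT a)
        (pow_mem (sum_X_mem_laurentIn F) _) (natExp_mem_supported fun j hj => by simp_all)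
        (natExp_mem_supported fun j hj => by simp_all),
      coeff_sum_X_pow, Finset.sum_const, smul_eq_mul, mul_assoc]
  -- Each free variable has exponent `a` in the term of index `a`, so `|F| a = N - a`, i.e. `a = m`.
  rw [add_pow, coeff_sum, Finsupp.finsetSum_apply, Finset.sum_congr rfl fun a _ => hterm a,
    Finset.sum_eq_single m]
  · rw [if_pos (by simp only [N]; ring_nf; omega), mul_comm (Nat.multinomial _ _ : R)]
  · intro a ha hne
    rw [if_neg, zero_mul, mul_zero]
    intro h
    have : (F.card + 1) * a = (F.card + 1) * m := by
      simp only [N] at h ha ⊢; rw [Finset.mem_range] at ha; rw [add_one_mul]; omega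
    exact hne (Nat.eq_of_mul_eq_mul_left F.card.succ_pos this)
  · intro h
    exact absurd (Finset.mem_range.2
      (Nat.lt_succ_of_le (Nat.le_mul_of_pos_left m F.card.succ_pos))) h

end Coefficients

structure IsBlockPartition {ι : Type*} (F : Finset σ) (B : ι → Finset σ) : Prop where
  pairwise_disjoint : Pairwise (Disjoint on B)
  disjoint_free : ∀ i, Disjoint (B i) F
  exists_mem_of_notMem_free : ∀ j ∉ F, ∃ i, j ∈ B i

namespace IsBlockPartition

variable {ι : Type*} [Fintype ι] [DecidableEq σ] {F : Finset σ} {B : ι → Finset σ}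

@[to_additive]
lemma prod_univ [Fintype σ] {M : Type*} [CommMonoid M] (hP : IsBlockPartition F B)
    (g : σ → M) : ∏ j, g j = (∏ j ∈ F, g j) * ∏ i, ∏ j ∈ B i, g j := by
  have huniv : F ∪ Finset.univ.biUnion B = Finset.univ := by
    refine Finset.eq_univ_of_forall fun j => ?_
    by_cases hj : j ∈ F
    · exact Finset.mem_union_left _ hj
    · obtain ⟨i, hi⟩ := hP.exists_mem_of_notMem_free j hj
      exact Finset.mem_union_right _ (Finset.mem_biUnion.2 ⟨i, Finset.mem_univ _, hi⟩)
  rw [← huniv, Finset.prod_union, Finset.prod_biUnion]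
  · exact fun i _ i' _ h => hP.pairwise_disjoint h
  · exact (Finset.disjoint_biUnion_right _ _ _).2 fun i _ => (hP.disjoint_free i).symm

lemma piecewise_zero_eq_sum (hP : IsBlockPartition F B) (c : σ → ℕ) :
    F.piecewise (0 : σ → ℕ) c = ∑ i, (B i).piecewise c 0 := by
  funext j
  rw [Finset.sum_apply]
  by_cases hj : j ∈ F
  · simp [hj, fun i => Finset.disjoint_right.1 (hP.disjoint_free i) hj]
  · obtain ⟨i, hi⟩ := hP.exists_mem_of_notMem_free j hj
    rw [Finset.piecewise_eq_of_notMem _ _ _ hj, Finset.sum_eq_single i,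
      Finset.piecewise_eq_of_mem _ _ _ hi]
    · exact fun i' _ h => Finset.piecewise_eq_of_notMem _ _ _
        fun h' => Finset.disjoint_left.1 (hP.pairwise_disjoint h) h' hi
    · simp

end IsBlockPartition

theorem coeff_zero_pow_of_isBlockPartition [Fintype σ] [DecidableEq σ] {K : Type*} [Field K]
    [CharZero K] {ι : Type*} [Fintype ι] [DecidableEq ι] {F : Finset σ} {B : ι → Finset σ}
    (hP : IsBlockPartition F B) {w : σ → ℕ} (hw : ∀ j ∈ F, w j = 1) {e r : ι → ℕ}
    (her : ∀ i, e i = r i + ∑ j ∈ B i, w j) (m : ℕ) :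
    (((∏ i, (1 + ∑ j ∈ B i, (X j : AddMonoidAlgebra K (σ →₀ ℤ))) ^ e i) *
        single (-natExp w) 1 + ∑ j ∈ F, X j) ^ ((F.card + 1) * m)).coeff 0 =
      (((F.card + 1) * m).factorial * ∏ i, ((e i * m).factorial : K)) /
        ((m.factorial : K) * (∏ j, ((w j * m).factorial : K)) *
          ∏ i, ((r i * m).factorial : K)) := by
  have hT : ∏ i, (1 + ∑ j ∈ B i, (X j : AddMonoidAlgebra K (σ →₀ ℤ))) ^ e i ∈
      laurentIn K (↑F)ᶜ :=
    Subsemiring.prod_mem _ fun i _ => pow_mem (add_mem (one_mem _) (laurentIn_mono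
      (Set.subset_compl_iff_disjoint_right.2 (Finset.disjoint_coe.2 (hP.disjoint_free i)))
      (sum_X_mem_laurentIn _))) _
  have hfree : (((F.card + 1) * m).choose m * Nat.multinomial F (fun _ => m) : K) =
      ((F.card + 1) * m).factorial / (m.factorial * ∏ j ∈ F, ((w j * m).factorial : K)) := by
    have hN : (F.card + 1) * m = m + ∑ j ∈ F, m := by simp [add_one_mul, add_comm]
    rw [Nat.choose_symm_of_eq_add hN,
      Nat.cast_choose_sum_mul_multinomial F _ (hN ▸ Nat.le_add_left _ _), hN, Nat.add_sub_cancel]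
    exact congrArg _ (congrArg _ (Finset.prod_congr rfl fun j hj => by rw [hw j hj, one_mul]))
  have hblock : ∀ i, ((e i * m).choose (∑ j ∈ B i, w j * m) *
      Nat.multinomial (B i) (fun j => w j * m) : K) =
      (e i * m).factorial / ((r i * m).factorial * ∏ j ∈ B i, ((w j * m).factorial : K)) := by
    intro i
    have he : e i * m = r i * m + ∑ j ∈ B i, w j * m := by rw [her, add_mul, Finset.sum_mul]
    rw [Nat.cast_choose_sum_mul_multinomial _ _ (he ▸ Nat.le_add_left _ _), he,
      Nat.add_sub_cancel]
  rw [coeff_zero_pow_mul_single_add_sum_X F hT hw, ← Finset.prod_pow, hP.piecewise_zero_eq_sum,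
    map_sum]
  simp only [← pow_mul]
  rw [coeff_prod_one_add_sum_X_pow hP.pairwise_disjoint, Finset.prod_congr rfl fun i _ => hblock i,
    hfree, hP.prod_univ, Finset.prod_div_distrib, Finset.prod_mul_distrib]
  field_simp

section MarkedBlocks

variable {α ι : Type*} {S : Finset α}

lemma isBlockPartition_subtype {I : ι → Finset α} {ν : ι → α} (hI : Pairwise (Disjoint on I))
    (hS : ∀ j ∈ S, ∀ i, j ≠ ν i) {F : Finset S} {B : ι → Finset S}
    (hF : ∀ j, j ∈ F ↔ ∀ i, ↑j ∉ I i) (hB : ∀ i j, j ∈ B i ↔ ↑j ∈ I i ∧ ↑j ≠ ν i) :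
    IsBlockPartition F B where
  pairwise_disjoint i i' h := Finset.disjoint_left.2 fun j hj hj' =>
    Finset.disjoint_left.1 (hI h) ((hB i j).1 hj).1 ((hB i' j).1 hj').1
  disjoint_free i := Finset.disjoint_left.2 fun j hj hj' => (hF j).1 hj' i ((hB i j).1 hj).1
  exists_mem_of_notMem_free j hj := by
    obtain ⟨i, hi⟩ := not_forall_not.1 (mt (hF j).2 hj)
    exact ⟨i, (hB i j).2 ⟨hi, hS j j.2 i⟩⟩

variable [DecidableEq α]

lemma sum_eq_add_sum_subtype {M : Type*} [AddCommMonoid M] {T : Finset α} {a : α}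
    (ha : a ∈ T) (hTS : T.erase a ⊆ S) {B : Finset S} (hB : ∀ j, j ∈ B ↔ ↑j ∈ T ∧ ↑j ≠ a)
    (g : α → M) :
    ∑ j ∈ T, g j = g a + ∑ j ∈ B, g j := by
  have hmap : T.erase a = B.map (Embedding.subtype _) := by
    ext x
    simp only [Finset.mem_map, hB, Embedding.subtype_apply, Subtype.exists, exists_and_right,
      exists_eq_right, Finset.mem_erase, exists_prop]
    exact ⟨fun h => ⟨⟨hTS (Finset.mem_erase.2 h), h.2⟩, h.1⟩, fun h => ⟨h.2, h.1.2⟩⟩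
  rw [← Finset.add_sum_erase T g ha, hmap, Finset.sum_map]
  rfl

lemma erase_subset_of_mem_iff {I : ι → Finset α} {ν : ι → α} {j₀ : α}
    (hI : Pairwise (Disjoint on I)) (hν : ∀ i, ν i ∈ I i) (hj₀ : ∀ i, j₀ ∉ I i)
    (hS : ∀ j, j ∈ S ↔ j ≠ j₀ ∧ ∀ i, j ≠ ν i) (i : ι) :
    (I i).erase (ν i) ⊆ S := fun j hj => by
  obtain ⟨hne, hj⟩ := Finset.mem_erase.1 hj
  refine (hS j).2 ⟨fun h => hj₀ i (h ▸ hj), fun i' h => ?_⟩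
  rcases eq_or_ne i' i with rfl | hii
  · exact hne h
  · exact Finset.disjoint_left.1 (hI hii) (h ▸ hν i') hj

@[to_additive]
lemma prod_univ_eq_mul_prod_subtype_mul_prod [Fintype α] [Fintype ι] {M : Type*} [CommMonoid M]
    {j₀ : α} {ν : ι → α} (hν : Injective ν) (hν₀ : ∀ i, ν i ≠ j₀)
    (hS : ∀ j, j ∈ S ↔ j ≠ j₀ ∧ ∀ i, j ≠ ν i) (g : α → M) :
    ∏ j, g j = g j₀ * (∏ j : S, g j) * ∏ i, g (ν i) := by
  have hSc : Sᶜ = Finset.cons j₀ (Finset.univ.map ⟨ν, hν⟩) (by simpa using fun i => hν₀ i) := by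
    ext j
    simp [hS, or_iff_not_imp_left, eq_comm]
  rw [← Finset.prod_compl_mul_prod S, hSc, Finset.prod_cons, Finset.prod_map, Finset.prod_coe_sort]
  simp [mul_right_comm]

end MarkedBlocks

end LGModel

theorem constant_terms_of_complete_intersection_LG_model_general
    (n k : ℕ)
    (w : Fin (n + 1) → ℕ) (hw0 : w 0 = 1)
    (I : Fin k → Finset (Fin (n + 1)))
    (h0I : ∀ i, (0 : Fin (n + 1)) ∉ I i)
    (hdisj : ∀ i i', i ≠ i' → Disjoint (I i) (I i'))
    (hout : ∀ j, (∀ i, j ∉ I i) → w j = 1)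
    (d : Fin k → ℕ) (hd : ∀ i, d i = ∑ j ∈ I i, w j)
    (d0 : ℕ) (hd0 : d0 = ∑ j, w j - ∑ i, d i)
    (ν : Fin k → Fin (n + 1)) (hν : ∀ i, ν i ∈ I i)
    -- the index set of the variables: `{1,…,n} \ {ν_1,…,ν_k}`
    (S : Finset (Fin (n + 1)))
    (hS : S = Finset.univ.filter fun j : Fin (n + 1) => j ≠ 0 ∧ ∀ i, j ≠ ν i)
    (f : AddMonoidAlgebra ℚ ({j : Fin (n + 1) // j ∈ S} →₀ ℤ))
    (hf : f =
      (∏ i : Fin k,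
          ((1 : AddMonoidAlgebra ℚ ({j : Fin (n + 1) // j ∈ S} →₀ ℤ)) +
            ∑ j ∈ Finset.univ.filter
                (fun j : {j : Fin (n + 1) // j ∈ S} => (j : Fin (n + 1)) ∈ I i ∧
                  (j : Fin (n + 1)) ≠ ν i),
              AddMonoidAlgebra.single (Finsupp.single j 1) (1 : ℚ)) ^ d i)
        * AddMonoidAlgebra.single
            (Finsupp.equivFunOnFinite.symm
              fun j : {j : Fin (n + 1) // j ∈ S} => -(w (j : Fin (n + 1)) : ℤ))
            (1 : ℚ)
      + ∑ j ∈ Finset.univ.filter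
            (fun j : {j : Fin (n + 1) // j ∈ S} => ∀ i, (j : Fin (n + 1)) ∉ I i),
          AddMonoidAlgebra.single (Finsupp.single j 1) (1 : ℚ)) :
    ∀ m : ℕ,
      (f ^ (d0 * m)).coeff 0 =
        (((d0 * m).factorial : ℚ) * ∏ i : Fin k, ((d i * m).factorial : ℚ)) /
          ∏ j : Fin (n + 1), ((w j * m).factorial : ℚ) := by
  intro m
  have hS' : ∀ j, j ∈ S ↔ j ≠ 0 ∧ ∀ i, j ≠ ν i := by simp [hS]
  have hν₀ : ∀ i, ν i ≠ 0 := fun i h => h0I i (h ▸ hν i)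
  have hνinj : Injective ν := fun i i' h => by_contra fun hne =>
    Finset.disjoint_left.1 (hdisj i i' hne) (hν i) (h ▸ hν i')
  set F := Finset.univ.filter (fun j : {j // j ∈ S} => ∀ i, ↑j ∉ I i)
  set B := fun i => Finset.univ.filter (fun j : {j // j ∈ S} => ↑j ∈ I i ∧ ↑j ≠ ν i)
  have hP : LGModel.IsBlockPartition F B := LGModel.isBlockPartition_subtype
    (fun i i' h => hdisj i i' h) (fun j hj => ((hS' j).1 hj).2) (by simp [F]) (by simp [B])
  have hdν : ∀ i, d i = w (ν i) + ∑ j ∈ B i, w j := fun i =>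
    (hd i).trans (LGModel.sum_eq_add_sum_subtype (hν i)
      (LGModel.erase_subset_of_mem_iff (fun i i' h => hdisj i i' h) hν h0I hS' i) (by simp [B]) w)
  have hwF : ∀ j ∈ F, w j = 1 := fun j hj => hout j (Finset.mem_filter.1 hj).2
  have hd0F : d0 = F.card + 1 := by
    rw [hd0, LGModel.sum_univ_eq_add_sum_subtype_add_sum hνinj hν₀ hS', hP.sum_univ,
      Finset.sum_congr rfl hwF, Finset.sum_congr rfl fun i _ => hdν i, Finset.sum_add_distrib, hw0]
    simp only [Finset.sum_const, smul_eq_mul, mul_one]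
    omega
  have hexp : Finsupp.equivFunOnFinite.symm (fun j : {j // j ∈ S} => -(w j : ℤ)) =
      -LGModel.natExp (fun j : {j // j ∈ S} => w j) := by
    ext; simp
  rw [hf, hexp, hd0F]
  refine (LGModel.coeff_zero_pow_of_isBlockPartition hP hwF hdν m).trans ?_
  rw [LGModel.prod_univ_eq_mul_prod_subtype_mul_prod hνinj hν₀ hS', hw0, one_mul]

/-- Let `w_0 = 1, w_1, …, w_n` be positive integers, `I_1, …, I_k` pairwise
disjoint nonempty subsets of `{1,…,n}` such that `w_j = 1` for every index `j` outside
`I_1 ∪ … ∪ I_k`, let `d_i = ∑_{j ∈ I_i} w_j` and `d_0 = ∑ w_j − ∑ d_i`, and pick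
`ν_i ∈ I_i`. The Laurent polynomial in the variables indexed by `{1,…,n} \ {ν_1,…,ν_k}`
`f = [∏_i (1 + ∑_{j ∈ I_i, j ≠ ν_i} x_j)^{d_i}] · ∏_j x_j^{-w_j} + ∑_{j ∉ ∪ I_i} x_j`
satisfies: the constant term of `f ^ (d_0 m)` equals
`(d_0 m)! (d_1 m)! ⋯ (d_k m)! / ((w_0 m)! (w_1 m)! ⋯ (w_n m)!)` for all `m`. -/
theorem constant_terms_of_complete_intersection_LG_model
    (n k : ℕ) (hn : 1 ≤ n) (hk : 1 ≤ k)
    (w : Fin (n + 1) → ℕ) (hwpos : ∀ j, 0 < w j) (hw0 : w 0 = 1)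
    (I : Fin k → Finset (Fin (n + 1)))
    (hne : ∀ i, (I i).Nonempty)
    (h0I : ∀ i, (0 : Fin (n + 1)) ∉ I i)
    (hdisj : ∀ i i', i ≠ i' → Disjoint (I i) (I i'))
    (hout : ∀ j, (∀ i, j ∉ I i) → w j = 1)
    (d : Fin k → ℕ) (hd : ∀ i, d i = ∑ j ∈ I i, w j)
    (d0 : ℕ) (hd0 : d0 = ∑ j, w j - ∑ i, d i)
    (ν : Fin k → Fin (n + 1)) (hν : ∀ i, ν i ∈ I i)
    -- the index set of the variables: `{1,…,n} \ {ν_1,…,ν_k}`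
    (S : Finset (Fin (n + 1)))
    (hS : S = Finset.univ.filter fun j : Fin (n + 1) => j ≠ 0 ∧ ∀ i, j ≠ ν i)
    (f : AddMonoidAlgebra ℚ ({j : Fin (n + 1) // j ∈ S} →₀ ℤ))
    (hf : f =
      (∏ i : Fin k,
          ((1 : AddMonoidAlgebra ℚ ({j : Fin (n + 1) // j ∈ S} →₀ ℤ)) +
            ∑ j ∈ Finset.univ.filter
                (fun j : {j : Fin (n + 1) // j ∈ S} => (j : Fin (n + 1)) ∈ I i ∧
                  (j : Fin (n + 1)) ≠ ν i),
              AddMonoidAlgebra.single (Finsupp.single j 1) (1 : ℚ)) ^ d i)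
        * AddMonoidAlgebra.single
            (Finsupp.equivFunOnFinite.symm
              fun j : {j : Fin (n + 1) // j ∈ S} => -(w (j : Fin (n + 1)) : ℤ))
            (1 : ℚ)
      + ∑ j ∈ Finset.univ.filter
            (fun j : {j : Fin (n + 1) // j ∈ S} => ∀ i, (j : Fin (n + 1)) ∉ I i),
          AddMonoidAlgebra.single (Finsupp.single j 1) (1 : ℚ)) :
    ∀ m : ℕ,
      (f ^ (d0 * m)).coeff 0 =
        (((d0 * m).factorial : ℚ) * ∏ i : Fin k, ((d i * m).factorial : ℚ)) /
          ∏ j : Fin (n + 1), ((w j * m).factorial : ℚ) :=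
  constant_terms_of_complete_intersection_LG_model_general n k w hw0 I h0I hdisj hout d hd d0 hd0 ν
    hν S hS f hf
end
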